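/- arXiv:math/0508507 — 2 statements merged into one kernel-verified Lean document; each statement's English description precedes it below -/
import Mathlib

section
/- With notation as in the tree-of-groups construction, a nonempty a ∈ G_n satisfies rk(a) = ∞ (lies on an infinite path in the derived tree on G) if and only if every element t ∈ a lies on an infinite path of T. -/
open scoped symmDiff

/-- `RankGE succ o x` means the tree rank of `x` (w.r.t. successor relation `succ`)
is at least `o`; unranked nodes (`rk = ∞`) satisfy this for every ordinal. -/
def RankGE {α : Type*} (succ : α → α → Prop) (o : Ordinal) (x : α) : Prop :=
  ∀ β < o, ∃ y, succ x y ∧ RankGE succ β y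
termination_by o

/-- `T` is a subtree of `ω^{<ω}`: closed under initial segments. -/
def IsTree (T : Set (List ℕ)) : Prop := ∀ s t : List ℕ, s <+: t → t ∈ T → s ∈ T

/-- `τ` is an immediate successor of `σ` in `T`. -/
def TSucc (T : Set (List ℕ)) (σ τ : List ℕ) : Prop := τ ∈ T ∧ ∃ k : ℕ, τ = σ ++ [k]

instance : Std.Commutative (α := Finset (List ℕ)) (· ∆ ·) := ⟨fun a b => symmDiff_comm a b⟩
instance : Std.Associative (α := Finset (List ℕ)) (· ∆ ·) := ⟨fun a b c => symmDiff_assoc a b c⟩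

/-- The predecessor map: the symmetric-difference sum of the singletons of the
`T`-predecessors of the members of `a`. -/
def pmap (a : Finset (List ℕ)) : Finset (List ℕ) :=
  Finset.fold (· ∆ ·) ∅ (fun t => {t.dropLast}) a

/-- The carrier `G = ⋃ₙ Gₙ`: an element of `Gₙ` is a pair `(n, a)` with `a` a finite
subset of the level-`n` nodes of `T`; `(n, ∅)` is the identity `idₙ` of `Gₙ`. -/
def Gset (T : Set (List ℕ)) : Set (ℕ × Finset (List ℕ)) :=
  {x | ∀ t ∈ x.2, t ∈ T ∧ t.length = x.1}

/-- The derived tree structure on `G`: `y ∈ G_{n+1}` is a successor of `x ∈ Gₙ` iff `p y = x`. -/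
def Gsucc (T : Set (List ℕ)) (x y : ℕ × Finset (List ℕ)) : Prop :=
  y ∈ Gset T ∧ y.1 = x.1 + 1 ∧ pmap y.2 = x.2


/-! In a tree given by a successor relation, a node has unbounded rank iff it starts an infinite
chain: unranked nodes form a set in which every node has a successor, and any such set consists of
unranked nodes. For `(n, a) ∈ G`, a `G`-successor of `(n, a)` contains a `T`-successor of each
`t ∈ a`, so the rank of `(n, a)` bounds that of every `t ∈ a`; conversely, if every `t ∈ a` lies on
a branch of `T`, extending each one along its branch gives a `G`-successor with the same property. -/

section RankGE

variable {α : Type*} {r : α → α → Prop}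

theorem rankGE_iff {o : Ordinal} {x : α} :
    RankGE r o x ↔ ∀ β < o, ∃ y, r x y ∧ RankGE r β y := by
  rw [RankGE]

theorem RankGE.mono {β γ : Ordinal} (h : γ ≤ β) {x : α} (hx : RankGE r β x) : RankGE r γ x :=
  rankGE_iff.2 fun δ hδ => rankGE_iff.1 hx δ (hδ.trans_le h)

theorem RankGE.of_simulation {σ : Type*} {s : σ → σ → Prop} (R : σ → α → Prop)
    (hR : ∀ u x y, R u x → r x y → ∃ v, s u v ∧ R v y) (β : Ordinal) {x : α} {u : σ}
    (hx : RankGE r β x) (hux : R u x) : RankGE s β u := by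
  induction β using WellFoundedLT.induction generalizing x u with
  | _ β ih =>
    refine rankGE_iff.2 fun γ hγ => ?_
    obtain ⟨y, hxy, hy⟩ := rankGE_iff.1 hx γ hγ
    obtain ⟨v, huv, hvy⟩ := hR u x y hux hxy
    exact ⟨v, huv, ih γ hγ hy hvy⟩

theorem rankGE_of_forall_exists_succ (S : Set α) (hS : ∀ x ∈ S, ∃ y ∈ S, r x y)
    (β : Ordinal) {x : α} (hx : x ∈ S) : RankGE r β x := by
  induction β using WellFoundedLT.induction generalizing x with
  | _ β ih =>
    obtain ⟨y, hy, hxy⟩ := hS x hx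
    exact rankGE_iff.2 fun γ hγ => ⟨y, hxy, ih γ hγ hy⟩

/-- Smallness bounds the ranks of the successors of `x` by a single ordinal. -/
theorem exists_succ_forall_rankGE [Small.{u} α] {x : α}
    (h : ∀ β : Ordinal.{u}, RankGE r β x) : ∃ y, r x y ∧ ∀ β : Ordinal.{u}, RankGE r β y := by
  by_contra! hc
  choose! B hB using hc
  obtain ⟨y, hxy, hy⟩ := rankGE_iff.1 (h (Order.succ (⨆ y, B y))) _ (Order.lt_succ _)
  exact hB y hxy (hy.mono (Ordinal.le_iSup B y))

theorem exists_chain_of_forall_rankGE [Small.{u} α] {x : α}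
    (h : ∀ β : Ordinal.{u}, RankGE r β x) : ∃ c : ℕ → α, c 0 = x ∧ ∀ i, r (c i) (c (i + 1)) := by
  have step (y : {y // ∀ β : Ordinal.{u}, RankGE r β y}) :
      ∃ z : {z // ∀ β : Ordinal.{u}, RankGE r β z}, r y z :=
    let ⟨z, hyz, hz⟩ := exists_succ_forall_rankGE y.2
    ⟨⟨z, hz⟩, hyz⟩
  choose F hF using step
  refine ⟨fun i => (F^[i] ⟨x, h⟩).1, rfl, fun i => ?_⟩
  simp only [Function.iterate_succ_apply']
  exact hF _

end RankGE

def IsOnBranch (T : Set (List ℕ)) (t : List ℕ) : Prop :=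
  ∃ f : ℕ → ℕ, (∀ m, List.ofFn (fun i : Fin m => f i) ∈ T) ∧
    t = List.ofFn (fun i : Fin t.length => f i)

theorem IsOnBranch.mem {T : Set (List ℕ)} {t : List ℕ} (h : IsOnBranch T t) : t ∈ T := by
  obtain ⟨f, hf, ht⟩ := h
  exact ht ▸ hf _

theorem IsOnBranch.exists_append_singleton {T : Set (List ℕ)} {t : List ℕ} (h : IsOnBranch T t) :
    ∃ k, IsOnBranch T (t ++ [k]) := by
  obtain ⟨f, hf, ht⟩ := h
  refine ⟨f t.length, f, hf, ?_⟩
  rw [List.length_append, List.length_singleton, List.ofFn_succ']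
  simp [← ht]

theorem isOnBranch_of_chain {T : Set (List ℕ)} (hT : IsTree T) (c : ℕ → List ℕ)
    (hc : ∀ i, TSucc T (c i) (c (i + 1))) : IsOnBranch T (c 0) := by
  have hprefix : ∀ ⦃i j⦄, i ≤ j → c i <+: c j :=
    Nat.rel_of_forall_rel_succ_of_le _ fun i => by
      obtain ⟨-, k, hk⟩ := hc i
      exact ⟨[k], hk.symm⟩
  have hlength (i : ℕ) : (c i).length = (c 0).length + i := by
    induction i with
    | zero => rfl
    | succ i ih =>
      obtain ⟨-, k, hk⟩ := hc i
      rw [hk, List.length_append, ih, List.length_singleton, Nat.add_assoc]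
  -- the `j`-th entry of the branch is read off the first `c i` long enough to have one
  set f : ℕ → ℕ := fun j => (c (j + 1)).getD j 0
  have hf (m : ℕ) : List.ofFn (fun i : Fin m => f i) = (c m).take m := by
    refine List.ext_getElem (by simp [hlength m]) fun i hi _ => ?_
    have him : i < m := by simpa using hi
    have hic : i < (c (i + 1)).length := by rw [hlength]; omega
    simp only [List.getElem_ofFn, List.getElem_take, f, List.getD_eq_getElem _ _ hic]
    exact (hprefix him).getElem hic
  refine ⟨f, fun m => ?_, ?_⟩
  · rw [hf]
    exact hT _ _ ((List.take_prefix m _).trans (hprefix m.le_succ)) (hc m).1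
  · rw [hf]
    exact List.prefix_iff_eq_take.1 (hprefix (Nat.zero_le _))

theorem pmap_subset_image (b : Finset (List ℕ)) : pmap b ⊆ b.image List.dropLast := by
  induction b using Finset.induction_on with
  | empty => simp [pmap]
  | insert x s hx ih =>
    rw [pmap, Finset.fold_insert hx, Finset.image_insert]
    exact Finset.symmDiff_subset_union.trans (Finset.union_subset_union_right ih)

theorem pmap_eq_image_of_injOn {b : Finset (List ℕ)}
    (h : Set.InjOn List.dropLast (b : Set (List ℕ))) : pmap b = b.image List.dropLast := by
  induction b using Finset.induction_on with
  | empty => simp [pmap]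
  | insert x s hx ih =>
    have hs : Set.InjOn List.dropLast s := h.mono (by simp)
    have hxs : x.dropLast ∉ s.image List.dropLast := fun hmem => by
      obtain ⟨y, hy, hyx⟩ := Finset.mem_image.1 hmem
      exact hx (h (by simp [hy]) (by simp) hyx ▸ hy)
    rw [pmap, Finset.fold_insert hx, ← pmap, ih hs, Finset.image_insert,
      (symmDiff_eq_sup _ _).2 (Finset.disjoint_singleton_left.2 hxs)]
    rfl

theorem Gsucc.exists_tSucc {T : Set (List ℕ)} {x y : ℕ × Finset (List ℕ)} (h : Gsucc T x y)
    {t : List ℕ} (ht : t ∈ x.2) : ∃ s, TSucc T t s ∧ s ∈ y.2 := by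
  obtain ⟨hy, hlen, hp⟩ := h
  obtain ⟨s, hs, rfl⟩ := Finset.mem_image.1 (pmap_subset_image y.2 (hp ▸ ht))
  have hne : s ≠ [] := by
    rintro rfl
    simpa [hlen] using (hy _ hs).2
  exact ⟨s, ⟨(hy s hs).1, _, (List.dropLast_append_getLast hne).symm⟩, hs⟩

theorem exists_gsucc_of_isOnBranch {T : Set (List ℕ)} {x : ℕ × Finset (List ℕ)}
    (hx : x ∈ Gset T) (h : ∀ t ∈ x.2, IsOnBranch T t) :
    ∃ y, Gsucc T x y ∧ ∀ s ∈ y.2, IsOnBranch T s := by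
  choose! k hk using fun t ht => (h t ht).exists_append_singleton
  have hpmap : pmap (x.2.image fun t => t ++ [k t]) = x.2 := by
    rw [pmap_eq_image_of_injOn, Finset.image_image]
    · simp [Function.comp_def]
    · intro _ hs _ hs' hss'
      obtain ⟨t, -, rfl⟩ := Finset.mem_image.1 hs
      obtain ⟨t', -, rfl⟩ := Finset.mem_image.1 hs'
      have htt' : t = t' := by simpa only [List.dropLast_concat] using hss'
      rw [htt']
  refine ⟨(x.1 + 1, x.2.image fun t => t ++ [k t]), ⟨?_, rfl, hpmap⟩, ?_⟩
  · simp only [Gset, Finset.mem_image, forall_exists_index, and_imp, Set.mem_ofPred_eq]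
    rintro _ t ht rfl
    simpa [(hx t ht).2] using (hk t ht).mem
  · simp only [Finset.mem_image, forall_exists_index, and_imp]
    rintro _ t ht rfl
    exact hk t ht

theorem stmt_6_general (T : Set (List ℕ)) (hT : IsTree T) (n : ℕ) (a : Finset (List ℕ))
    (ha : ((n, a) : ℕ × Finset (List ℕ)) ∈ Gset T) :
    (∀ β : Ordinal, RankGE (Gsucc T) β (n, a)) ↔
      ∀ t ∈ a, ∃ f : ℕ → ℕ, (∀ m, List.ofFn (fun i : Fin m => f i) ∈ T) ∧
        t = List.ofFn (fun i : Fin t.length => f i) := by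
  constructor
  · intro h t ht
    have htrank (β : Ordinal) : RankGE (TSucc T) β t :=
      (h β).of_simulation (fun s x => s ∈ x.2) (fun _ _ _ hu hxy => hxy.exists_tSucc hu) β ht
    obtain ⟨c, rfl, hc⟩ := exists_chain_of_forall_rankGE htrank
    exact isOnBranch_of_chain hT c hc
  · intro h β
    exact rankGE_of_forall_exists_succ {x | x ∈ Gset T ∧ ∀ t ∈ x.2, IsOnBranch T t}
      (fun x hx => (exists_gsucc_of_isOnBranch hx.1 hx.2).imp fun y hy =>
        ⟨⟨hy.1.1, hy.2⟩, hy.1⟩) β ⟨ha, h⟩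

theorem stmt_6 (T : Set (List ℕ)) (hT : IsTree T) (n : ℕ) (a : Finset (List ℕ))
    (hne : a.Nonempty) (ha : ((n, a) : ℕ × Finset (List ℕ)) ∈ Gset T) :
    (∀ β : Ordinal, RankGE (Gsucc T) β (n, a)) ↔
      ∀ t ∈ a, ∃ f : ℕ → ℕ, (∀ m, List.ofFn (fun i : Fin m => f i) ∈ T) ∧
        t = List.ofFn (fun i : Fin t.length => f i) :=
  stmt_6_general T hT n a ha
end

section
/- For a computable (or merely arbitrary) tree T ⊆ ω^{<ω}, the structure A(T) = (G, (f_a)_{a∈G}) has a non-trivial automorphism if and only if T has an infinite path. -/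
open scoped symmDiff

/-- The operations `f_a`: `fA a b = a* ∆ b*` where `a*`, `b*` are the iterated
predecessors of `a`, `b` down to the minimum of their levels. -/
def fA (x y : ℕ × Finset (List ℕ)) : ℕ × Finset (List ℕ) :=
  (min x.1 y.1, (pmap^[x.1 - min x.1 y.1] x.2) ∆ (pmap^[y.1 - min x.1 y.1] y.2))

/-- An automorphism of the structure `A(T) = (G, (f_a)_{a ∈ G})`: a bijection of `G`
commuting with each of the named unary operations `f_a`. -/
def IsAuto (T : Set (List ℕ)) (g : ℕ × Finset (List ℕ) → ℕ × Finset (List ℕ)) : Prop :=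
  Set.BijOn g (Gset T) (Gset T) ∧ ∀ a ∈ Gset T, ∀ b ∈ Gset T, g (fA a b) = fA a (g b)

/-! An automorphism `g` preserves levels, because `f_{id_m}` fixes exactly the elements of level
`≤ m` and `g` is injective. Since `f_b(b) = idₙ` for `b ∈ Gₙ`, `g` then acts on `Gₙ` as translation
by `cₙ := g(idₙ)`, and level-wise translations commute with all `f_a` exactly when
`p(cₙ₊₁) = cₙ` for every `n`. Such a coherent family with some `c_N ≠ ∅` yields an infinite
branch by climbing from a node of `c_N` (every node of `cₙ` is the predecessor of a node of
`cₙ₊₁`); conversely a branch `σ` gives the coherent family `cₙ = {σ ↾ n}`. -/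

def levelTranslate (c : ℕ → Finset (List ℕ)) (x : ℕ × Finset (List ℕ)) :
    ℕ × Finset (List ℕ) :=
  (x.1, x.2 ∆ c x.1)

def IsCoherent (c : ℕ → Finset (List ℕ)) : Prop := ∀ n, pmap (c (n + 1)) = c n

@[simp]
lemma Finset.empty_symmDiff {α : Type*} [DecidableEq α] (s : Finset α) : ∅ ∆ s = s :=
  bot_symmDiff s

@[simp]
lemma Finset.symmDiff_empty {α : Type*} [DecidableEq α] (s : Finset α) : s ∆ ∅ = s :=
  symmDiff_bot s

lemma pmap_empty : pmap ∅ = ∅ := Finset.fold_empty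

lemma pmap_insert {a : List ℕ} {s : Finset (List ℕ)} (h : a ∉ s) :
    pmap (insert a s) = {a.dropLast} ∆ pmap s :=
  Finset.fold_insert h

lemma Finset.singleton_symmDiff_of_notMem {α : Type*} [DecidableEq α] {a : α} {s : Finset α}
    (h : a ∉ s) :
    {a} ∆ s = insert a s := by
  ext x
  by_cases hx : x = a <;> simp [Finset.mem_symmDiff, hx, h]

lemma pmap_singleton_symmDiff (a : List ℕ) (s : Finset (List ℕ)) :
    pmap ({a} ∆ s) = {a.dropLast} ∆ pmap s := by
  by_cases h : a ∈ s
  · have ha : a ∉ s.erase a := Finset.notMem_erase a s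
    have hs : s = {a} ∆ s.erase a := by
      rw [Finset.singleton_symmDiff_of_notMem ha, Finset.insert_erase h]
    rw [hs, symmDiff_symmDiff_cancel_left, Finset.singleton_symmDiff_of_notMem ha,
      pmap_insert ha, symmDiff_symmDiff_cancel_left]
  · rw [Finset.singleton_symmDiff_of_notMem h, pmap_insert h]

lemma pmap_symmDiff (s t : Finset (List ℕ)) : pmap (s ∆ t) = pmap s ∆ pmap t := by
  induction s using Finset.induction_on with
  | empty => simp [pmap_empty]
  | insert a s ha ih =>
    rw [← Finset.singleton_symmDiff_of_notMem ha, symmDiff_assoc, pmap_singleton_symmDiff,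
      pmap_singleton_symmDiff, ih, symmDiff_assoc]

lemma pmap_singleton (a : List ℕ) : pmap {a} = {a.dropLast} := by
  simpa [pmap_empty] using pmap_singleton_symmDiff a ∅

lemma iterate_pmap_empty (j : ℕ) : pmap^[j] ∅ = ∅ :=
  Function.iterate_fixed pmap_empty j

lemma iterate_pmap_symmDiff (j : ℕ) (s t : Finset (List ℕ)) :
    pmap^[j] (s ∆ t) = pmap^[j] s ∆ pmap^[j] t := by
  induction j with
  | zero => rfl
  | succ j ih => simp only [Function.iterate_succ_apply', ih, pmap_symmDiff]

lemma exists_mem_dropLast_eq_of_mem_pmap {s : Finset (List ℕ)} {t : List ℕ} (h : t ∈ pmap s) :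
    ∃ u ∈ s, u.dropLast = t := by
  induction s using Finset.induction_on with
  | empty => simp [pmap_empty] at h
  | insert a s ha ih =>
    rw [pmap_insert ha, Finset.mem_symmDiff, Finset.mem_singleton] at h
    rcases h with ⟨rfl, -⟩ | ⟨h, -⟩
    · exact ⟨a, Finset.mem_insert_self a s, rfl⟩
    · obtain ⟨u, hu, rfl⟩ := ih h
      exact ⟨u, Finset.mem_insert_of_mem hu, rfl⟩

lemma IsCoherent.iterate_pmap {c : ℕ → Finset (List ℕ)} (hc : IsCoherent c) (n j : ℕ) :
    pmap^[j] (c (n + j)) = c n := by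
  induction j with
  | zero => rfl
  | succ j ih => rw [Function.iterate_succ_apply, ← add_assoc, hc, ih]

section Gset

variable {T : Set (List ℕ)}

lemma mk_empty_mem_Gset (n : ℕ) : (n, (∅ : Finset (List ℕ))) ∈ Gset T := by
  simp [Gset]

lemma mk_symmDiff_mem_Gset {n : ℕ} {s t : Finset (List ℕ)} (hs : (n, s) ∈ Gset T)
    (ht : (n, t) ∈ Gset T) : (n, s ∆ t) ∈ Gset T := by
  intro u hu
  rcases Finset.mem_symmDiff.mp hu with ⟨hu, -⟩ | ⟨hu, -⟩
  exacts [hs u hu, ht u hu]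

lemma mk_pmap_mem_Gset (hT : IsTree T) {n : ℕ} {s : Finset (List ℕ)}
    (hs : (n + 1, s) ∈ Gset T) : (n, pmap s) ∈ Gset T := by
  intro t ht
  obtain ⟨u, hu, rfl⟩ := exists_mem_dropLast_eq_of_mem_pmap ht
  obtain ⟨huT, hulen⟩ := hs u hu
  exact ⟨hT _ _ (List.dropLast_prefix u) huT, by simp [hulen]⟩

lemma mk_iterate_pmap_mem_Gset (hT : IsTree T) {n j : ℕ} {s : Finset (List ℕ)}
    (hs : (n + j, s) ∈ Gset T) : (n, pmap^[j] s) ∈ Gset T := by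
  induction j generalizing s with
  | zero => exact hs
  | succ j ih => exact ih (mk_pmap_mem_Gset hT (by rwa [← add_assoc] at hs))

lemma fA_mem_Gset (hT : IsTree T) {a b : ℕ × Finset (List ℕ)} (ha : a ∈ Gset T)
    (hb : b ∈ Gset T) : fA a b ∈ Gset T := by
  have hlevel {x : ℕ × Finset (List ℕ)} (hx : x ∈ Gset T) (hle : min a.1 b.1 ≤ x.1) :
      (min a.1 b.1, pmap^[x.1 - min a.1 b.1] x.2) ∈ Gset T :=
    mk_iterate_pmap_mem_Gset hT (by rwa [Nat.add_sub_cancel' hle])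
  exact mk_symmDiff_mem_Gset (hlevel ha (min_le_left _ _)) (hlevel hb (min_le_right _ _))

end Gset

lemma fA_self (b : ℕ × Finset (List ℕ)) : fA b b = (b.1, ∅) := by
  simp [fA]

lemma fA_of_fst_eq {a b : ℕ × Finset (List ℕ)} (h : a.1 = b.1) : fA a b = (a.1, a.2 ∆ b.2) := by
  simp [fA, h]

lemma fA_empty_left {n : ℕ} {b : ℕ × Finset (List ℕ)} (h : n ≤ b.1) :
    fA (n, ∅) b = (n, pmap^[b.1 - n] b.2) := by
  simp [fA, h, iterate_pmap_empty]

lemma fA_empty_left_of_le {n : ℕ} {b : ℕ × Finset (List ℕ)} (h : b.1 ≤ n) : fA (n, ∅) b = b := by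
  simp [fA, h, iterate_pmap_empty]

lemma fA_levelTranslate {c : ℕ → Finset (List ℕ)} (hc : IsCoherent c) (a b : ℕ × Finset (List ℕ)) :
    fA a (levelTranslate c b) = levelTranslate c (fA a b) := by
  have hcb : pmap^[b.1 - min a.1 b.1] (c b.1) = c (min a.1 b.1) := by
    simpa [Nat.add_sub_cancel' (min_le_right a.1 b.1)] using
      hc.iterate_pmap (min a.1 b.1) (b.1 - min a.1 b.1)
  simp only [fA, levelTranslate, iterate_pmap_symmDiff, hcb, symmDiff_assoc]

section Automorphism

variable {T : Set (List ℕ)} {g : ℕ × Finset (List ℕ) → ℕ × Finset (List ℕ)}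

lemma isAuto_levelTranslate {c : ℕ → Finset (List ℕ)} (hcT : ∀ n, (n, c n) ∈ Gset T)
    (hc : IsCoherent c) : IsAuto T (levelTranslate c) := by
  have hmaps : Set.MapsTo (levelTranslate c) (Gset T) (Gset T) := fun x hx =>
    mk_symmDiff_mem_Gset hx (hcT x.1)
  have hinv : Set.InvOn (levelTranslate c) (levelTranslate c) (Gset T) (Gset T) := by
    constructor <;> intro x _ <;> simp [levelTranslate]
  exact ⟨hinv.bijOn hmaps hmaps, fun a _ b _ => (fA_levelTranslate hc a b).symm⟩

lemma IsAuto.fst_apply (hT : IsTree T) (hg : IsAuto T g) {b : ℕ × Finset (List ℕ)}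
    (hb : b ∈ Gset T) : (g b).1 = b.1 := by
  have hcomm := hg.2
  have hle : (g b).1 ≤ b.1 := by
    have h := congrArg Prod.fst (hcomm (b.1, ∅) (mk_empty_mem_Gset _) b hb)
    rw [fA_empty_left_of_le le_rfl] at h
    simp only [fA] at h
    omega
  have hfix : fA ((g b).1, ∅) b = b := by
    refine hg.1.injOn (fA_mem_Gset hT (mk_empty_mem_Gset _) hb) hb ?_
    rw [hcomm _ (mk_empty_mem_Gset _) b hb, fA_empty_left_of_le le_rfl]
  have h := congrArg Prod.fst hfix
  simp only [fA] at h
  omega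

lemma IsAuto.mk_apply_empty_mem_Gset (hT : IsTree T) (hg : IsAuto T g) (n : ℕ) :
    (n, (g (n, ∅)).2) ∈ Gset T := by
  have h : g (n, ∅) = (n, (g (n, ∅)).2) := Prod.ext (hg.fst_apply hT (mk_empty_mem_Gset n)) rfl
  exact h ▸ hg.1.mapsTo (mk_empty_mem_Gset n)

lemma IsAuto.eqOn_levelTranslate (hT : IsTree T) (hg : IsAuto T g) :
    Set.EqOn g (levelTranslate fun n => (g (n, ∅)).2) (Gset T) := by
  intro b hb
  have hlevel := hg.fst_apply hT hb
  have h := hg.2 b hb b hb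
  rw [fA_self, fA_of_fst_eq hlevel.symm] at h
  refine Prod.ext hlevel ?_
  simp only [levelTranslate, h, symmDiff_symmDiff_cancel_left]

lemma IsAuto.isCoherent (hT : IsTree T) (hg : IsAuto T g) : IsCoherent fun n => (g (n, ∅)).2 := by
  intro n
  have h := hg.2 (n, ∅) (mk_empty_mem_Gset n) (n + 1, ∅) (mk_empty_mem_Gset (n + 1))
  have hsucc : g (n + 1, ∅) = (n + 1, (g (n + 1, ∅)).2) :=
    Prod.ext (hg.fst_apply hT (mk_empty_mem_Gset _)) rfl
  rw [fA_empty_left (Nat.le_succ n), hsucc, fA_empty_left (Nat.le_succ n)] at h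
  simpa [pmap_empty] using (congrArg Prod.snd h).symm

end Automorphism

section Path

variable {T : Set (List ℕ)}

lemma exists_path_of_prefix_chain (hT : IsTree T) (σ : ℕ → List ℕ) (hσT : ∀ k, σ k ∈ T)
    (hσ : ∀ k, σ k <+: σ (k + 1)) (hlen : ∀ k, k ≤ (σ k).length) :
    ∃ f : ℕ → ℕ, ∀ n, List.ofFn (fun i : Fin n => f i) ∈ T := by
  have hmono {k m : ℕ} (hkm : k ≤ m) : σ k <+: σ m := by
    induction m, hkm using Nat.le_induction with
    | base => exact List.prefix_refl _
    | succ m _ ih => exact ih.trans (hσ m)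
  refine ⟨fun i => (σ (i + 1)).getD i 0, fun n => hT _ (σ n) ?_ (hσT n)⟩
  refine List.prefix_iff_eq_take.mpr (List.ext_getElem (by simpa using hlen n) ?_)
  intro i hi _
  have hi : i < n := by simpa using hi
  have hilen : i < (σ (i + 1)).length := hlen (i + 1)
  simp only [List.getElem_ofFn, List.getElem_take, List.getD_eq_getElem _ _ hilen]
  exact (hmono hi).getElem hilen

lemma IsCoherent.exists_path (hT : IsTree T) {c : ℕ → Finset (List ℕ)} (hc : IsCoherent c)
    (hcT : ∀ n, (n, c n) ∈ Gset T) {N : ℕ} (hN : c N ≠ ∅) :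
    ∃ f : ℕ → ℕ, ∀ n, List.ofFn (fun i : Fin n => f i) ∈ T := by
  have hlift (m : ℕ) (t : List ℕ) (ht : t ∈ c m) : ∃ u ∈ c (m + 1), u.dropLast = t :=
    exists_mem_dropLast_eq_of_mem_pmap (by rwa [hc m])
  choose! up hup_mem hup_drop using hlift
  obtain ⟨t₀, ht₀⟩ := Finset.nonempty_iff_ne_empty.mpr hN
  let σ : ℕ → List ℕ := fun k => Nat.rec t₀ (fun k s => up (N + k) s) k
  have hσc (k : ℕ) : σ k ∈ c (N + k) := by
    induction k with
    | zero => exact ht₀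
    | succ k ih => exact hup_mem _ _ ih
  refine exists_path_of_prefix_chain hT σ (fun k => (hcT _ _ (hσc k)).1) (fun k => ?_)
    (fun k => by rw [(hcT _ _ (hσc k)).2]; omega)
  have h : (σ (k + 1)).dropLast = σ k := hup_drop _ _ (hσc k)
  exact h ▸ List.dropLast_prefix _

lemma mk_singleton_ofFn_mem_Gset {f : ℕ → ℕ} (hf : ∀ n, List.ofFn (fun i : Fin n => f i) ∈ T)
    (n : ℕ) : (n, {List.ofFn (fun i : Fin n => f i)}) ∈ Gset T := by
  simp [Gset, hf n]

lemma isCoherent_singleton_ofFn (f : ℕ → ℕ) :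
    IsCoherent fun n => {List.ofFn (fun i : Fin n => f i)} := by
  intro n
  rw [pmap_singleton, List.ofFn_succ', List.concat_eq_append, List.dropLast_concat]
  rfl

end Path

theorem stmt_7 (T : Set (List ℕ)) (hT : IsTree T) :
    (∃ g, IsAuto T g ∧ ∃ x ∈ Gset T, g x ≠ x) ↔
      ∃ f : ℕ → ℕ, ∀ n, List.ofFn (fun i : Fin n => f i) ∈ T := by
  constructor
  · rintro ⟨g, hg, x, hx, hgx⟩
    refine (hg.isCoherent hT).exists_path hT (hg.mk_apply_empty_mem_Gset hT) (N := x.1) ?_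
    intro h
    apply hgx
    rw [hg.eqOn_levelTranslate hT hx]
    simp [levelTranslate, h]
  · rintro ⟨f, hf⟩
    refine ⟨_, isAuto_levelTranslate (mk_singleton_ofFn_mem_Gset hf) (isCoherent_singleton_ofFn f),
      (0, ∅), mk_empty_mem_Gset 0, ?_⟩
    simp [levelTranslate]
end
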